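/- For every real number λ and every integer k ≥ 1, the degenerate Bell number satisfies the Dobinski-like formula φ_{k,λ} = (1/e) Σ_{n=0}^{∞} (n)_{k,λ}/n! = (1/e) Σ_{n=1}^{∞} (n−λ)_{k−1,λ}/(n−1)!, where both series converge. (This is formula (37), the main Dobinski-like formula of the paper.) -/

import Mathlib

open Finset

/-- Generalized falling factorial `(x)_{n,λ} = x(x-λ)⋯(x-(n-1)λ)`. -/
noncomputable def dfall (lam x : ℝ) (n : ℕ) : ℝ := ∏ i ∈ Finset.range n, (x - i * lam)

/-- Ordinary falling factorial `(x)_n = x(x-1)⋯(x-n+1)`. -/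
noncomputable def ffall (x : ℝ) (n : ℕ) : ℝ := ∏ i ∈ Finset.range n, (x - i)

/-- Degenerate Stirling numbers of the second kind, defined by the recurrence
`S_{2,λ}(0,0)=1`, `S_{2,λ}(n,k)=0` for `k>n` (and `k<0`), and
`S_{2,λ}(n+1,k) = S_{2,λ}(n,k-1) + (k-nλ) S_{2,λ}(n,k)`. -/
noncomputable def dStir (lam : ℝ) : ℕ → ℕ → ℝ
  | 0, 0 => 1
  | 0, _ + 1 => 0
  | n + 1, 0 => ((0 : ℝ) - n * lam) * dStir lam n 0
  | n + 1, k + 1 => dStir lam n k + (((k : ℝ) + 1) - n * lam) * dStir lam n (k + 1)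

/-- Degenerate Bell polynomials `φ_{n,λ}(x) = Σ_{k=0}^n S_{2,λ}(n,k) x^k`. -/
noncomputable def dBell (lam x : ℝ) (n : ℕ) : ℝ :=
  ∑ k ∈ Finset.range (n + 1), dStir lam n k * x ^ k

/-!
The recurrence for `S_{2,λ}` says exactly that `(x)_{n,λ} = Σ_j S_{2,λ}(n,j) (x)_j`, where
`(x)_j` is the ordinary falling factorial, since `(x - nλ)(x)_j = (x)_{j+1} + (j - nλ)(x)_j`.
On the other hand `Σ_n (n)_j xⁿ/n! = x^j eˣ`, so summing the expansion termwise gives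
`Σ_n (n)_{k,λ} xⁿ/n! = eˣ φ_{k,λ}(x)`. The second series is the first one with its vanishing
`n = 0` term dropped, after peeling the factor `n` off `(n)_{k,λ} = n (n - λ)_{k-1,λ}`.
-/

open Nat

theorem dStir_eq_zero_of_lt (lam : ℝ) {n j : ℕ} (h : n < j) : dStir lam n j = 0 := by
  induction n generalizing j with
  | zero =>
    obtain ⟨j, rfl⟩ := exists_eq_add_one_of_ne_zero (by omega : j ≠ 0)
    rfl
  | succ n ih =>
    obtain ⟨j, rfl⟩ := exists_eq_add_one_of_ne_zero (by omega : j ≠ 0)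
    rw [dStir, ih (by omega), ih (by omega)]
    ring

theorem dfall_succ (lam x : ℝ) (n : ℕ) : dfall lam x (n + 1) = dfall lam x n * (x - n * lam) :=
  prod_range_succ _ _

theorem dfall_succ' (lam x : ℝ) (n : ℕ) : dfall lam x (n + 1) = x * dfall lam (x - lam) n := by
  rw [dfall, prod_range_succ', mul_comm]
  simp only [cast_zero, zero_mul, sub_zero, cast_succ, dfall]
  congr 1
  exact prod_congr rfl fun i _ => by ring

theorem ffall_succ (x : ℝ) (n : ℕ) : ffall x (n + 1) = ffall x n * (x - n) :=
  prod_range_succ _ _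

theorem ffall_natCast (n j : ℕ) : ffall (n : ℝ) j = n.descFactorial j := by
  rw [ffall, ← descPochhammer_eval_eq_prod_range, descPochhammer_eval_eq_descFactorial]

theorem dfall_eq_sum_dStir_mul_ffall (lam x : ℝ) (n : ℕ) :
    dfall lam x n = ∑ j ∈ range (n + 1), dStir lam n j * ffall x j := by
  induction n with
  | zero => simp [dfall, dStir, ffall]
  | succ n ih =>
    set c : ℕ → ℝ := fun j => ((j : ℝ) - n * lam) * dStir lam n j * ffall x j with hc
    have hc_top : c (n + 1) = 0 := by
      simp [hc, dStir_eq_zero_of_lt lam (lt_add_one n)]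
    have hc_shift : ∑ j ∈ range (n + 1), c j = ∑ j ∈ range (n + 1), c (j + 1) + c 0 := by
      rw [← sum_range_succ' c, sum_range_succ c (n + 1), hc_top, add_zero]
    have hmul : ∀ j, dStir lam n j * ffall x j * (x - n * lam)
        = dStir lam n j * ffall x (j + 1) + c j := fun j => by
      rw [ffall_succ]
      ring
    have hrec : ∀ j, dStir lam (n + 1) (j + 1) * ffall x (j + 1)
        = dStir lam n j * ffall x (j + 1) + c (j + 1) := fun j => by
      rw [dStir, hc]
      push_cast
      ring
    calc dfall lam x (n + 1)
        = ∑ j ∈ range (n + 1), (dStir lam n j * ffall x (j + 1) + c j) := by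
          rw [dfall_succ, ih, sum_mul]
          exact sum_congr rfl fun j _ => hmul j
      _ = ∑ j ∈ range (n + 1), (dStir lam n j * ffall x (j + 1) + c (j + 1)) + c 0 := by
          rw [sum_add_distrib, sum_add_distrib, hc_shift, add_assoc]
      _ = ∑ j ∈ range (n + 1 + 1), dStir lam (n + 1) j * ffall x j := by
          rw [sum_range_succ' (fun j => dStir lam (n + 1) j * ffall x j)]
          simp only [hrec]
          congr 1
          simp [hc, dStir, ffall]

theorem hasSum_ffall_mul_pow_div_factorial (x : ℝ) (j : ℕ) :
    HasSum (fun n : ℕ => ffall n j * x ^ n / n !) (x ^ j * Real.exp x) := by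
  rw [← hasSum_nat_add_iff' j]
  have hlow : ∑ i ∈ range j, ffall i j * x ^ i / i ! = 0 := sum_eq_zero fun i hi => by
    rw [ffall_natCast, descFactorial_eq_zero_iff_lt.mpr (mem_range.mp hi)]
    simp
  have hshift : ∀ m : ℕ, ffall ↑(m + j) j * x ^ (m + j) / (m + j)! = x ^ j * (x ^ m / m !) := by
    intro m
    have hfac := factorial_mul_descFactorial (le_add_left j m)
    rw [Nat.add_sub_cancel] at hfac
    rw [ffall_natCast, ← hfac, cast_mul, pow_add]
    field_simp
  rw [hlow, sub_zero, Real.exp_eq_exp_ℝ]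
  simpa only [hshift] using (NormedSpace.expSeries_div_hasSum_exp x).mul_left (x ^ j)

theorem hasSum_dfall_mul_pow_div_factorial (lam x : ℝ) (k : ℕ) :
    HasSum (fun n : ℕ => dfall lam n k * x ^ n / n !) (Real.exp x * dBell lam x k) := by
  have hlimit : Real.exp x * dBell lam x k
      = ∑ j ∈ range (k + 1), dStir lam k j * (x ^ j * Real.exp x) := by
    rw [dBell, mul_sum]
    exact sum_congr rfl fun j _ => by ring
  rw [hlimit]
  refine (hasSum_sum fun j _ => (hasSum_ffall_mul_pow_div_factorial x j).mul_left
    (dStir lam k j)).congr_fun fun n => ?_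
  rw [dfall_eq_sum_dStir_mul_ffall, sum_mul, sum_div]
  exact sum_congr rfl fun j _ => by ring

theorem hasSum_dfall_add_one_sub_div_factorial (lam : ℝ) (k : ℕ) :
    HasSum (fun n : ℕ => dfall lam ((n : ℝ) + 1 - lam) k / n !)
      (Real.exp 1 * dBell lam 1 (k + 1)) := by
  have h := hasSum_dfall_mul_pow_div_factorial lam 1 (k + 1)
  rw [← hasSum_nat_add_iff' 1, sum_range_one] at h
  simp only [dfall_succ', cast_zero, zero_mul, zero_div, sub_zero, one_pow, mul_one] at h
  refine h.congr_fun fun n => ?_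
  rw [factorial_succ]
  push_cast
  field_simp

/-- for `λ ∈ ℝ` and `k ≥ 1`, both series below converge and the degenerate
Bell number `φ_{k,λ} = φ_{k,λ}(1)` satisfies the Dobinski-like formulas
`φ_{k,λ} = (1/e) Σ_{n=0}^{∞} (n)_{k,λ}/n! = (1/e) Σ_{n=1}^{∞} (n−λ)_{k−1,λ}/(n−1)!`
(the second series re-indexed by `n ↦ n+1` so as to run over all of `ℕ`). -/
theorem dBellNumber_dobinski (lam : ℝ) (k : ℕ) (hk : 1 ≤ k) :
    Summable (fun n : ℕ => dfall lam (n : ℝ) k / n.factorial)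
      ∧ Summable (fun n : ℕ => dfall lam ((n : ℝ) + 1 - lam) (k - 1) / n.factorial)
      ∧ dBell lam 1 k = (Real.exp 1)⁻¹ * ∑' n : ℕ, dfall lam (n : ℝ) k / n.factorial
      ∧ dBell lam 1 k
          = (Real.exp 1)⁻¹ * ∑' n : ℕ, dfall lam ((n : ℝ) + 1 - lam) (k - 1) / n.factorial := by
  obtain ⟨m, rfl⟩ := Nat.exists_eq_add_of_le' hk
  have h₁ := hasSum_dfall_mul_pow_div_factorial lam 1 (m + 1)
  simp only [one_pow, mul_one] at h₁
  have h₂ := hasSum_dfall_add_one_sub_div_factorial lam m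
  rw [Nat.add_sub_cancel]
  refine ⟨h₁.summable, h₂.summable, ?_, ?_⟩
  · rw [h₁.tsum_eq, inv_mul_cancel_left₀ (Real.exp_ne_zero 1)]
  · rw [h₂.tsum_eq, inv_mul_cancel_left₀ (Real.exp_ne_zero 1)]
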